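/- Let 𝔫 be the 5-dimensional real Lie algebra with orthonormal basis {E₁,…,E₅} and non-zero brackets [E₁,E₂] = m·E₃, [E₁,E₃] = (√3/2)m·E₄, [E₂,E₃] = (√3/2)m·E₅ with m > 0. Then the diagonal endomorphism D defined by D(E₁) = (5/8)m²·E₁, D(E₂) = (5/8)m²·E₂, D(E₃) = (5/4)m²·E₃, D(E₄) = (15/8)m²·E₄, D(E₅) = (15/8)m²·E₅ is a derivation of 𝔫, and Ric = −(3/2)m²·Id + D. -/

import Mathlib

/-!
Both operators are diagonal in the basis `E`. A diagonal map is a derivation as soon as its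
weights are additive along the brackets (`w₃ = w₁ + w₂`, `w₄ = w₁ + w₃`, `w₅ = w₂ + w₃`), which
holds for `(5, 5, 10, 15, 15)·m²/8`. Evaluating the Ricci formula on `E k` shows that `Ric` is
diagonal with eigenvalues `(-7/8, -7/8, -1/4, 3/8, 3/8)·m²`, i.e. `-(3/2)m²` plus the weights of `D`.
-/

open scoped BigOperators

namespace Nilsoliton15

noncomputable section

abbrev V : Type := Fin 5 → ℝ

/-- The orthonormal basis vectors E₁,…,E₅ (indexed 0,…,4). -/
def E (i : Fin 5) : V := Pi.single i 1

/-- The inner product making `E` an orthonormal basis. -/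
def ip (x y : V) : ℝ := ∑ i, x i * y i

/-- `D` is a derivation of the bracket `br`. -/
def IsDerivation (br : V → V → V) (D : V →ₗ[ℝ] V) : Prop :=
  ∀ X Y : V, D (br X Y) = br (D X) Y + br X (D Y)

/-- `Ric` is the Ricci operator of the nilpotent Lie group with left-invariant
metric determined by the bracket `br` and the orthonormal basis `E`. -/
def IsRicci (br : V → V → V) (Ric : V →ₗ[ℝ] V) : Prop :=
  ∀ X Y : V, ip (Ric X) Y =
      -(1/2) * (∑ i : Fin 5, ip (br X (E i)) (br Y (E i)))
      + (1/4) * (∑ i : Fin 5, ∑ j : Fin 5, ip (br (E i) (E j)) X * ip (br (E i) (E j)) Y)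

/-- The bracket: [E₁,E₂] = m·E₃, [E₁,E₃] = (√3/2)m·E₄, [E₂,E₃] = (√3/2)m·E₅. -/
def br (m : ℝ) (X Y : V) : V :=
  (m * (X 0 * Y 1 - X 1 * Y 0)) • E 2 + ((Real.sqrt 3 / 2) * m * (X 0 * Y 2 - X 2 * Y 0)) • E 3 + ((Real.sqrt 3 / 2) * m * (X 1 * Y 2 - X 2 * Y 1)) • E 4

lemma _root_.LinearMap.apply_eq_mul_of_apply_single {ι R : Type*} [Fintype ι] [DecidableEq ι]
    [CommSemiring R] (f : (ι → R) →ₗ[R] ι → R) (c : ι → R)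
    (hf : ∀ i, f (Pi.single i 1) = c i • Pi.single i 1) (x : ι → R) : f x = c * x := by
  have : f = Matrix.toLin' (Matrix.diagonal c) := by
    refine LinearMap.pi_ext' fun i => LinearMap.ext_ring ?_
    ext j
    simp [hf, Pi.single_apply]
  ext i
  simp [this, Matrix.mulVec_diagonal]

lemma ip_E_right (x : V) (k : Fin 5) : ip x (E k) = x k := by
  simp [ip, E, Pi.single_apply]

lemma br_apply (m : ℝ) (X Y : V) (k : Fin 5) :
    br m X Y k = ![0, 0, m * (X 0 * Y 1 - X 1 * Y 0),
      (Real.sqrt 3 / 2) * m * (X 0 * Y 2 - X 2 * Y 0),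
      (Real.sqrt 3 / 2) * m * (X 1 * Y 2 - X 2 * Y 1)] k := by
  fin_cases k <;> simp [br, E]

lemma isDerivation_br_of_apply_eq_mul {m : ℝ} {D : V →ₗ[ℝ] V} {c : V} (hD : ∀ X, D X = c * X)
    (h2 : c 2 = c 0 + c 1) (h3 : c 3 = c 0 + c 2) (h4 : c 4 = c 1 + c 2) :
    IsDerivation (br m) D := by
  intro X Y
  ext k
  simp only [Pi.add_apply, hD, Pi.mul_apply, br_apply]
  fin_cases k <;> simp [h2, h3, h4] <;> ring

lemma IsRicci.apply_eq {br : V → V → V} {Ric : V →ₗ[ℝ] V} (h : IsRicci br Ric) (X : V) (k : Fin 5) :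
    Ric X k = -(1/2) * (∑ i, ip (br X (E i)) (br (E k) (E i)))
      + (1/4) * (∑ i, ∑ j, ip (br (E i) (E j)) X * br (E i) (E j) k) := by
  simpa only [ip_E_right] using h X (E k)

lemma IsRicci.br_apply_eq {m : ℝ} {Ric : V →ₗ[ℝ] V} (h : IsRicci (br m) Ric) (X : V) :
    Ric X = (m ^ 2 • ![-7/8, -7/8, -1/4, 3/8, 3/8]) * X := by
  have hs3 : Real.sqrt 3 ^ 2 = 3 := Real.sq_sqrt (by norm_num)
  ext k
  rw [h.apply_eq]
  fin_cases k <;> simp [ip, Fin.sum_univ_five, br_apply, E, Pi.single_apply] <;> ring_nf <;>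
    rw [hs3] <;> ring

theorem stmt15_general (m : ℝ)
    (Ric : V →ₗ[ℝ] V) (hRic : IsRicci (br m) Ric)
    (D : V →ₗ[ℝ] V)
    (hD0 : D (E 0) = ((5/8) * m ^ 2) • E 0)
    (hD1 : D (E 1) = ((5/8) * m ^ 2) • E 1)
    (hD2 : D (E 2) = ((5/4) * m ^ 2) • E 2)
    (hD3 : D (E 3) = ((15/8) * m ^ 2) • E 3)
    (hD4 : D (E 4) = ((15/8) * m ^ 2) • E 4) :
    IsDerivation (br m) D ∧
    Ric = (-(3/2) * m ^ 2) • (LinearMap.id : V →ₗ[ℝ] V) + D := by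
  have hDX : ∀ X, D X = (m ^ 2 • ![5/8, 5/8, 5/4, 15/8, 15/8]) * X := by
    refine D.apply_eq_mul_of_apply_single _ fun i => ?_
    change D (E i) = _
    fin_cases i <;> simp [hD0, hD1, hD2, hD3, hD4, mul_comm] <;> rfl
  refine ⟨isDerivation_br_of_apply_eq_mul hDX (by simp; ring) (by simp; ring) (by simp; ring), ?_⟩
  refine LinearMap.ext fun X => funext fun k => ?_
  rw [hRic.br_apply_eq, LinearMap.add_apply, Pi.add_apply, hDX]
  fin_cases k <;> simp <;> ring

theorem stmt15 (m : ℝ) (hm : 0 < m)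
    (Ric : V →ₗ[ℝ] V) (hRic : IsRicci (br m) Ric)
    (D : V →ₗ[ℝ] V)
    (hD0 : D (E 0) = ((5/8) * m ^ 2) • E 0)
    (hD1 : D (E 1) = ((5/8) * m ^ 2) • E 1)
    (hD2 : D (E 2) = ((5/4) * m ^ 2) • E 2)
    (hD3 : D (E 3) = ((15/8) * m ^ 2) • E 3)
    (hD4 : D (E 4) = ((15/8) * m ^ 2) • E 4) :
    IsDerivation (br m) D ∧
    Ric = (-(3/2) * m ^ 2) • (LinearMap.id : V →ₗ[ℝ] V) + D :=
  stmt15_general m Ric hRic D hD0 hD1 hD2 hD3 hD4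

end

end Nilsoliton15
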